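/- Let U ⊆ ℝ² be a nonempty open connected set and let α₋, α₊ : U → ℝ_{>0} be twice continuously differentiable functions satisfying the Toda system (⋆). If α₋ is constant or α₊ is constant, then both are constant and α₋ = α₊ = 1/√2 on U. -/
import Mathlib

noncomputable section

/-- The flat Laplacian `Δ₀ f = ∂²f/∂x² + ∂²f/∂y²` on (an open subset of) `ℝ²`. -/
def flatLaplacian (f : ℝ × ℝ → ℝ) (p : ℝ × ℝ) : ℝ :=
  iteratedDeriv 2 (fun t => f (t, p.2)) p.1 + iteratedDeriv 2 (fun t => f (p.1, t)) p.2

/-- The Toda system (⋆): `Δ₀ log(α₋²) = −4(3α₋² + α₊² − 2)γ²` and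
`Δ₀ log(α₊²) = −4(3α₊² + α₋² − 2)γ²`, where `γ² = (α₋α₊)^{−1/2}`, on `U`. -/
def TodaSystem (U : Set (ℝ × ℝ)) (αm αp : ℝ × ℝ → ℝ) : Prop :=
  ∀ p ∈ U,
    flatLaplacian (fun q => Real.log (αm q ^ 2)) p =
      -4 * (3 * αm p ^ 2 + αp p ^ 2 - 2) * (αm p * αp p) ^ (-(1 / 2) : ℝ) ∧
    flatLaplacian (fun q => Real.log (αp q ^ 2)) p =
      -4 * (3 * αp p ^ 2 + αm p ^ 2 - 2) * (αm p * αp p) ^ (-(1 / 2) : ℝ)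

lemma deriv_zero_of_const_on {f : ℝ → ℝ} {s : Set ℝ} (hs : IsOpen s) {c : ℝ}
    (h : ∀ y ∈ s, f y = c) : ∀ y ∈ s, deriv f y = 0 := by
  intro y hy
  have he : f =ᶠ[nhds y] fun _ => c :=
    Filter.eventuallyEq_of_mem (hs.mem_nhds hy) h
  rw [he.deriv_eq, deriv_const]

lemma iteratedDeriv_two_of_const_on {f : ℝ → ℝ} {s : Set ℝ} (hs : IsOpen s) {c : ℝ}
    (h : ∀ y ∈ s, f y = c) {x : ℝ} (hx : x ∈ s) : iteratedDeriv 2 f x = 0 := by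
  have h1 := deriv_zero_of_const_on hs h
  rw [show (2 : ℕ) = 1 + 1 from rfl, iteratedDeriv_succ, iteratedDeriv_one]
  exact deriv_zero_of_const_on hs h1 x hx

lemma flatLaplacian_zero_of_const_on {g : ℝ × ℝ → ℝ} {U : Set (ℝ × ℝ)} (hU : IsOpen U)
    {c : ℝ} (h : ∀ q ∈ U, g q = c) {p : ℝ × ℝ} (hp : p ∈ U) : flatLaplacian g p = 0 := by
  unfold flatLaplacian
  have h1 : iteratedDeriv 2 (fun t => g (t, p.2)) p.1 = 0 :=
    iteratedDeriv_two_of_const_on (s := {t : ℝ | (t, p.2) ∈ U})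
      (hU.preimage (by fun_prop)) (fun y hy => h _ hy) hp
  have h2 : iteratedDeriv 2 (fun t => g (p.1, t)) p.2 = 0 :=
    iteratedDeriv_two_of_const_on (s := {t : ℝ | (p.1, t) ∈ U})
      (hU.preimage (by fun_prop)) (fun y hy => h _ hy) hp
  rw [h1, h2, add_zero]

lemma toda_aux (U : Set (ℝ × ℝ)) (hUo : IsOpen U) (αm αp : ℝ × ℝ → ℝ)
    (hpos : ∀ p ∈ U, 0 < αm p ∧ 0 < αp p)
    (htoda : TodaSystem U αm αp)
    (hc : ∀ p ∈ U, ∀ q ∈ U, αm p = αm q) :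
    ∀ p ∈ U, αm p = 1 / Real.sqrt 2 ∧ αp p = 1 / Real.sqrt 2 := by
  have hE : ∀ q ∈ U, 3 * αm q ^ 2 + αp q ^ 2 - 2 = 0 := by
    intro q hq
    have h0 : flatLaplacian (fun r => Real.log (αm r ^ 2)) q = 0 :=
      flatLaplacian_zero_of_const_on hUo (c := Real.log (αm q ^ 2))
        (fun r hr => by rw [hc r hr q hq]) hq
    have heq := (htoda q hq).1
    rw [h0] at heq
    have hg : (0 : ℝ) < (αm q * αp q) ^ (-(1 / 2) : ℝ) :=
      Real.rpow_pos_of_pos (mul_pos (hpos q hq).1 (hpos q hq).2) _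
    rcases mul_eq_zero.mp heq.symm with h | h
    · rcases mul_eq_zero.mp h with h' | h'
      · norm_num at h'
      · linarith
    · linarith
  intro p hp
  -- αp is constant on U
  have hcp : ∀ q ∈ U, αp q = αp p := by
    intro q hq
    have h1 := hE q hq
    have h2 := hE p hp
    have hm : αm q = αm p := hc q hq p hp
    have hm2 : αm q ^ 2 = αm p ^ 2 := by rw [hm]
    have hsq : αp q ^ 2 = αp p ^ 2 := by linarith
    nlinarith [(hpos q hq).2, (hpos p hp).2]
  have h0 : flatLaplacian (fun r => Real.log (αp r ^ 2)) p = 0 :=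
    flatLaplacian_zero_of_const_on hUo (c := Real.log (αp p ^ 2))
      (fun r hr => by rw [hcp r hr]) hp
  have heq := (htoda p hp).2
  rw [h0] at heq
  have hg : (0 : ℝ) < (αm p * αp p) ^ (-(1 / 2) : ℝ) :=
    Real.rpow_pos_of_pos (mul_pos (hpos p hp).1 (hpos p hp).2) _
  have hE2 : 3 * αp p ^ 2 + αm p ^ 2 - 2 = 0 := by
    rcases mul_eq_zero.mp heq.symm with h | h
    · rcases mul_eq_zero.mp h with h' | h'
      · norm_num at h'
      · linarith
    · linarith
  have hE1 := hE p hp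
  have hm2 : αm p ^ 2 = 1 / 2 := by linarith
  have hp2 : αp p ^ 2 = 1 / 2 := by linarith
  have hs : (1 / Real.sqrt 2 : ℝ) ^ 2 = 1 / 2 := by
    rw [div_pow, one_pow, Real.sq_sqrt] <;> norm_num
  have hspos : (0 : ℝ) < 1 / Real.sqrt 2 := by positivity
  constructor
  · nlinarith [(hpos p hp).1]
  · nlinarith [(hpos p hp).2]

theorem constant_angle_functions
    (U : Set (ℝ × ℝ)) (hUo : IsOpen U) (hUne : U.Nonempty) (hUconn : IsConnected U)
    (αm αp : ℝ × ℝ → ℝ)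
    (hpos : ∀ p ∈ U, 0 < αm p ∧ 0 < αp p)
    (hsm : ContDiffOn ℝ 2 αm U ∧ ContDiffOn ℝ 2 αp U)
    (htoda : TodaSystem U αm αp)
    (hconst : (∀ p ∈ U, ∀ q ∈ U, αm p = αm q) ∨ (∀ p ∈ U, ∀ q ∈ U, αp p = αp q)) :
    ∀ p ∈ U, αm p = 1 / Real.sqrt 2 ∧ αp p = 1 / Real.sqrt 2 := by
  rcases hconst with hc | hc
  · exact toda_aux U hUo αm αp hpos htoda hc
  · have htoda' : TodaSystem U αp αm := by
      intro p hp
      obtain ⟨h1, h2⟩ := htoda p hp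
      rw [mul_comm (αm p) (αp p)] at h1 h2
      exact ⟨h2, h1⟩
    have := toda_aux U hUo αp αm (fun p hp => ⟨(hpos p hp).2, (hpos p hp).1⟩) htoda' hc
    exact fun p hp => ⟨(this p hp).2, (this p hp).1⟩
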